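/- arXiv:1101.1152 — 11 statements merged into one kernel-verified Lean document; each statement's English description precedes it below -/
import Mathlib

section
/- Let f and g be polynomials with integer coefficients such that the content of g divides the content of f, and suppose that g(n) divides f(n) for infinitely many integers n. Then g divides f in ℤ[x]. -/
/-!
Pseudo-division gives `a ^ k • f = g * q + r` in `ℤ[X]` with `a` the leading coefficient of `g`
and `deg r < deg g`. At every integer `n` with `g(n) ∣ f(n)` we get `g(n) ∣ r(n)`, while
`|r(n)| < |g(n)|` for all but finitely many `n`; hence `r` has infinitely many roots and vanishes.
So `g ∣ a ^ k • f`, and Gauss's lemma together with `c(g) ∣ c(f)` removes the factor `a ^ k`.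
-/

open Polynomial

namespace Polynomial

theorem exists_C_leadingCoeff_pow_mul_eq_mul_add {R : Type*} [CommRing R] [IsDomain R]
    (f : R[X]) {g : R[X]} (hg : g ≠ 0) :
    ∃ (k : ℕ) (q r : R[X]), C (g.leadingCoeff ^ k) * f = g * q + r ∧ r.degree < g.degree := by
  induction hd : f.degree using WellFoundedLT.induction generalizing f with
  | ind n ih =>
  subst hd
  by_cases hlt : f.degree < g.degree
  · exact ⟨0, 0, f, by simp, hlt⟩
  have hf : f ≠ 0 := fun h0 => hlt (by simp [h0, Ne.bot_lt (degree_ne_bot.2 hg)])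
  have hle : g.natDegree ≤ f.natDegree := natDegree_le_natDegree (not_lt.1 hlt)
  set f' := C g.leadingCoeff * f - C f.leadingCoeff * X ^ (f.natDegree - g.natDegree) * g
  have hdeg : f'.degree < f.degree := by
    have hlc : g.leadingCoeff ≠ 0 := leadingCoeff_ne_zero.2 hg
    have hlf : f.leadingCoeff ≠ 0 := leadingCoeff_ne_zero.2 hf
    calc f'.degree < (C g.leadingCoeff * f).degree := by
          apply degree_sub_lt_left
          · rw [degree_C_mul hlc, degree_mul, degree_C_mul_X_pow _ hlf, degree_eq_natDegree hf,
              degree_eq_natDegree hg, ← Nat.cast_add, Nat.sub_add_cancel hle]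
          · exact mul_ne_zero (C_ne_zero.2 hlc) hf
          · simp only [leadingCoeff_mul, leadingCoeff_C, leadingCoeff_X_pow, one_mul, mul_comm]
      _ = f.degree := degree_C_mul hlc
  obtain ⟨k, q, r, hqr, hr⟩ := ih _ hdeg f' rfl
  refine ⟨k + 1, q + C (g.leadingCoeff ^ k * f.leadingCoeff) * X ^ (f.natDegree - g.natDegree),
    r, ?_, hr⟩
  simp only [f', pow_succ, C_mul] at hqr ⊢
  linear_combination hqr

theorem eq_zero_of_infinite_eval_dvd_eval_of_degree_lt {r g : ℤ[X]} (hdeg : r.degree < g.degree)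
    (h : {n : ℤ | g.eval n ∣ r.eval n}.Infinite) : r = 0 := by
  refine eq_zero_of_infinite_isRoot r ((h.sdiff (finite_abs_eval_le_of_degree_lt hdeg)).mono ?_)
  rintro n ⟨hdvd, hlt⟩
  exact Int.eq_zero_of_abs_lt_dvd ((abs_dvd _ _).2 hdvd) (not_le.1 hlt)

theorem dvd_of_dvd_C_mul_of_content_dvd {R : Type*} [CommRing R] [IsDomain R]
    [NormalizedGCDMonoid R] {f g : R[X]} {d : R} (hd : d ≠ 0) (hc : g.content ∣ f.content)
    (h : g ∣ C d * f) : g ∣ f := by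
  rcases eq_or_ne f 0 with rfl | hf
  · exact dvd_zero g
  have hdf : C d * f ≠ 0 := mul_ne_zero (C_ne_zero.2 hd) hf
  refine (dvd_iff_content_dvd_content_and_primPart_dvd_primPart hf).2 ⟨hc, ?_⟩
  have hprim := ((dvd_iff_content_dvd_content_and_primPart_dvd_primPart hdf).1 h).2
  rwa [(associated_primPart_mul hdf).dvd_iff_dvd_right,
    (isUnit_primPart_C d).dvd_mul_left] at hprim

end Polynomial

theorem content_dvd_and_infinite_dvd_values_imp_dvd
    (f g : Polynomial ℤ)
    (hc : g.content ∣ f.content)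
    (h : {n : ℤ | g.eval n ∣ f.eval n}.Infinite) :
    g ∣ f := by
  rcases eq_or_ne g 0 with rfl | hg
  · rw [eq_zero_of_infinite_isRoot f (h.mono fun n hn => by simpa using hn)]
  obtain ⟨k, q, r, hfqr, hdeg⟩ := exists_C_leadingCoeff_pow_mul_eq_mul_add f hg
  have hr : r = 0 := by
    refine eq_zero_of_infinite_eval_dvd_eval_of_degree_lt hdeg (h.mono fun n hn => ?_)
    have hval := congrArg (eval n) hfqr
    rw [eval_mul, eval_add, eval_mul] at hval
    exact (dvd_add_right (dvd_mul_right _ _)).1 (hval ▸ dvd_mul_of_dvd_right hn _)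
  exact dvd_of_dvd_C_mul_of_content_dvd (pow_ne_zero k (leadingCoeff_ne_zero.2 hg)) hc
    ⟨q, by rw [hfqr, hr, add_zero]⟩
end

section
/- For positive integers k and n, the k-th cyclotomic polynomial Φ_k(x) divides Φ_k(x^n) in ℤ[x] if and only if gcd(n, k) = 1. -/
/-!
Since `Φ_k` is the minimal polynomial over `ℤ` of a primitive `k`-th root of unity `ζ`, it divides
`Φ_k(X ^ n)` exactly when `ζ ^ n` is a root of `Φ_k`, i.e. a primitive `k`-th root of unity, which
happens exactly when `n` is coprime to `k`.
-/

open Polynomial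

theorem Polynomial.aeval_cyclotomic_int_eq_zero_iff {K : Type*} [Field K] [CharZero K] {k : ℕ}
    (hk : 0 < k) (μ : K) : aeval μ (cyclotomic k ℤ) = 0 ↔ IsPrimitiveRoot μ k := by
  rw [aeval_def, eval₂_eq_eval_map, map_cyclotomic, ← IsRoot.def,
    isRoot_cyclotomic_iff_charZero hk]

namespace IsPrimitiveRoot

variable {K : Type*} [Field K] [CharZero K] {ζ : K} {k : ℕ}

theorem cyclotomic_int_dvd_iff_aeval_eq_zero (hζ : IsPrimitiveRoot ζ k) (hk : 0 < k)
    (p : ℤ[X]) : cyclotomic k ℤ ∣ p ↔ aeval ζ p = 0 := by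
  rw [cyclotomic_eq_minpoly hζ hk, minpoly.isIntegrallyClosed_dvd_iff (hζ.isIntegral hk)]

theorem cyclotomic_int_dvd_cyclotomic_comp_pow_iff (hζ : IsPrimitiveRoot ζ k) (hk : 0 < k)
    (n : ℕ) : cyclotomic k ℤ ∣ (cyclotomic k ℤ).comp (X ^ n) ↔ n.Coprime k := by
  rw [hζ.cyclotomic_int_dvd_iff_aeval_eq_zero hk, aeval_comp, map_pow, aeval_X,
    aeval_cyclotomic_int_eq_zero_iff hk, hζ.pow_iff_coprime hk]

end IsPrimitiveRoot

theorem cyclotomic_dvd_cyclotomic_comp_pow_iff_gcd_eq_one_general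
    (k n : ℕ) (hk : 0 < k) :
    cyclotomic k ℤ ∣ (cyclotomic k ℤ).comp (X ^ n) ↔ Nat.gcd n k = 1 :=
  (Complex.isPrimitiveRoot_exp k hk.ne').cyclotomic_int_dvd_cyclotomic_comp_pow_iff hk n

theorem cyclotomic_dvd_cyclotomic_comp_pow_iff_gcd_eq_one
    (k n : ℕ) (hk : 0 < k) (hn : 0 < n) :
    cyclotomic k ℤ ∣ (cyclotomic k ℤ).comp (X ^ n) ↔ Nat.gcd n k = 1 :=
  cyclotomic_dvd_cyclotomic_comp_pow_iff_gcd_eq_one_general k n hk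
end

section
/- Let k ≥ 2 be an integer and let p be a monic irreducible polynomial with integer coefficients such that p(n) divides p(n^k) for infinitely many positive integers n. Then either p(x) = x, or p = Φ_j for some positive integer j with gcd(j, k) = 1. -/
/-!
Since `p` is monic, infinitely many integer divisibilities `p(n) ∣ p(n^k)` force
`p ∣ p(X^k)`: the remainder of `p(X^k)` modulo `p` has smaller degree, so it is eventually
smaller than `p(n)` in absolute value and yet divisible by it. Hence the complex roots of `p`
are closed under `z ↦ z^k`, so the orbit `α, α^k, α^(k^2), …` of a root `α` repeats, and `α`
is either `0` or a root of unity. In the first case `X ∣ p`, so `p = X`. In the second case `α`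
is a primitive `j`-th root of unity, whose minimal polynomial `Φ_j` divides, hence equals, `p`;
as `α^k` is again a root of `Φ_j`, it is again primitive, i.e. `gcd(j, k) = 1`.
-/

open Polynomial

theorem eq_zero_or_isOfFinOrder_of_pow_eq_pow {M : Type*} [MonoidWithZero M] [IsCancelMulZero M]
    {z : M} {m n : ℕ} (hmn : m < n) (h : z ^ m = z ^ n) : z = 0 ∨ IsOfFinOrder z := by
  rcases eq_or_ne z 0 with hz | hz
  · exact .inl hz
  refine .inr (isOfFinOrder_iff_pow_eq_one.mpr ⟨n - m, Nat.sub_pos_of_lt hmn, ?_⟩)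
  rwa [← Nat.add_sub_of_le hmn.le, pow_add, eq_comm, mul_eq_left₀ (pow_ne_zero m hz)] at h

theorem IsPrimitiveRoot.coprime_of_aeval_cyclotomic_pow_eq_zero {K : Type*} [CommRing K]
    [IsDomain K] [CharZero K] {μ : K} {n : ℕ} (hμ : IsPrimitiveRoot μ n) (hn : 0 < n) {k : ℕ}
    (h : aeval (μ ^ k) (cyclotomic n ℤ) = 0) : k.Coprime n := by
  have : NeZero n := ⟨hn.ne'⟩
  refine (hμ.pow_iff_coprime hn k).mp (isRoot_cyclotomic_iff.mp ?_)
  rwa [aeval_def, eval₂_eq_eval_map, map_cyclotomic] at h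

namespace Polynomial

variable {R S : Type*} [CommRing R] [CommRing S] [Algebra R S] {p : R[X]} {k : ℕ}

theorem aeval_pow_eq_zero_of_dvd_comp (hdvd : p ∣ p.comp (X ^ k)) {z : S} (hz : aeval z p = 0) :
    aeval (z ^ k) p = 0 := by
  simpa [aeval_comp] using aeval_eq_zero_of_dvd_aeval_eq_zero hdvd hz

theorem aeval_pow_pow_eq_zero_of_dvd_comp (hdvd : p ∣ p.comp (X ^ k)) {z : S}
    (hz : aeval z p = 0) (m : ℕ) : aeval (z ^ k ^ m) p = 0 := by
  induction m with
  | zero => simpa using hz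
  | succ m ih => simpa [pow_succ, pow_mul] using aeval_pow_eq_zero_of_dvd_comp hdvd ih

theorem eq_zero_or_isOfFinOrder_of_dvd_comp [IsDomain R] [IsDomain S]
    [Module.IsTorsionFree R S] (hp : p ≠ 0) (hk : 2 ≤ k) (hdvd : p ∣ p.comp (X ^ k)) {z : S}
    (hz : aeval z p = 0) : z = 0 ∨ IsOfFinOrder z := by
  obtain ⟨a, b, hab, heq⟩ := Set.Finite.exists_lt_map_eq_of_forall_mem (f := fun m ↦ z ^ k ^ m)
    (fun m ↦ mem_rootSet.mpr ⟨hp, aeval_pow_pow_eq_zero_of_dvd_comp hdvd hz m⟩)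
    (p.rootSet_finite S)
  exact eq_zero_or_isOfFinOrder_of_pow_eq_pow (Nat.pow_lt_pow_right hk hab) heq

theorem eq_cyclotomic_of_aeval_eq_zero {K : Type*} [Field K] [CharZero K] {p : ℤ[X]}
    (hmonic : p.Monic) (hirr : Irreducible p) {μ : K} {n : ℕ} (hμ : IsPrimitiveRoot μ n)
    (hn : 0 < n) (hroot : aeval μ p = 0) : p = cyclotomic n ℤ := by
  have hdvd : cyclotomic n ℤ ∣ p :=
    cyclotomic_eq_minpoly hμ hn ▸ minpoly.isIntegrallyClosed_dvd (hμ.isIntegral hn) hroot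
  exact (eq_of_monic_of_associated (cyclotomic.monic n ℤ) hmonic
    ((cyclotomic.irreducible hn).associated_of_dvd hirr hdvd)).symm

end Polynomial

theorem monic_irreducible_dvd_pow_values
    (k : ℕ) (hk : 2 ≤ k) (p : Polynomial ℤ)
    (hmonic : p.Monic) (hirr : Irreducible p)
    (h : {n : ℕ | 0 < n ∧ p.eval (n : ℤ) ∣ p.eval ((n : ℤ) ^ k)}.Infinite) :
    p = X ∨ ∃ j : ℕ, 0 < j ∧ Nat.gcd j k = 1 ∧ p = cyclotomic j ℤ := by
  have hdvd : p ∣ p.comp (X ^ k) := by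
    refine dvd_of_infinite_eval_dvd_eval hmonic ((h.image Nat.cast_injective.injOn).mono ?_)
    rintro _ ⟨n, ⟨-, hn⟩, rfl⟩
    simpa [eval_comp] using hn
  have hdeg : p.degree ≠ 0 :=
    (natDegree_pos_iff_degree_pos.mp (hmonic.natDegree_pos.mpr hirr.ne_one)).ne'
  obtain ⟨α, hα⟩ := IsAlgClosed.exists_aeval_eq_zero ℂ p hdeg
  rcases eq_zero_or_isOfFinOrder_of_dvd_comp hirr.ne_zero hk hdvd hα with rfl | hfin
  · have hX : X ∣ p := X_dvd_iff.mpr (by simpa [← coeff_zero_eq_aeval_zero'] using hα)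
    exact .inl
      (eq_of_monic_of_associated monic_X hmonic (irreducible_X.associated_of_dvd hirr hX)).symm
  · have hprim := IsPrimitiveRoot.orderOf α
    have hcyc := eq_cyclotomic_of_aeval_eq_zero hmonic hirr hprim hfin.orderOf_pos hα
    have hαk := aeval_pow_eq_zero_of_dvd_comp hdvd hα
    rw [hcyc] at hαk
    exact .inr ⟨orderOf α, hfin.orderOf_pos,
      (hprim.coprime_of_aeval_cyclotomic_pow_eq_zero hfin.orderOf_pos hαk).symm, hcyc⟩
end

section
/- For a positive integer n, the polynomial x^{2n} + x^n + 1 is irreducible over ℚ if and only if n = 3^j for some integer j ≥ 0. -/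
open Polynomial

lemma expand_cyclo3 (n : ℕ) :
    expand ℚ n (cyclotomic 3 ℚ) = (X : Polynomial ℚ) ^ (2 * n) + X ^ n + 1 := by
  rw [cyclotomic_prime ℚ 3]
  simp [Finset.sum_range_succ, pow_mul, map_add, map_pow]
  ring

lemma expand_pow3_cyclo3 (j : ℕ) :
    expand ℚ (3 ^ j) (cyclotomic 3 ℚ) = cyclotomic (3 ^ (j + 1)) ℚ := by
  induction j with
  | zero => simp
  | succ k ih =>
    have h3 : Nat.Prime 3 := by norm_num
    rw [pow_succ, mul_comm, ← expand_expand, ih,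
      cyclotomic_expand_eq_cyclotomic h3 (dvd_pow_self 3 (Nat.succ_ne_zero k)) ℚ,
      ← pow_succ]

theorem irreducible_X_pow_two_n_add_X_pow_n_add_one_iff
    (n : ℕ) (hn : 0 < n) :
    Irreducible ((X : Polynomial ℚ) ^ (2 * n) + X ^ n + 1) ↔ ∃ j : ℕ, n = 3 ^ j := by
  rw [← expand_cyclo3]
  constructor
  · intro h
    by_contra hnp
    push_neg at hnp
    have h3 : Nat.Prime 3 := by norm_num
    set j := n.factorization 3 with hj
    set m := n / 3 ^ j with hm
    have hfact : 3 ^ j * m = n := Nat.ordProj_mul_ordCompl_eq_self n 3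
    have hm0 : m ≠ 0 := (Nat.ordCompl_pos 3 hn.ne').ne'
    have hnd : ¬ 3 ∣ m := Nat.not_dvd_ordCompl h3 hn.ne'
    have hm1 : m ≠ 1 := by
      intro h1
      exact hnp j (by rw [← hfact, h1, mul_one])
    obtain ⟨p, hp, hpm⟩ := Nat.exists_prime_and_dvd hm1
    obtain ⟨m', hm'⟩ := hpm
    have hp3 : ¬ p ∣ 3 ^ (j + 1) := by
      intro hd
      have h33 := (Nat.prime_dvd_prime_iff_eq hp h3).1 (Nat.Prime.dvd_of_dvd_pow hp hd)
      exact hnd (h33 ▸ ⟨m', hm'⟩)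
    -- n = m' * (p * 3^j)
    have hne : n = m' * (p * 3 ^ j) := by rw [← hfact, hm']; ring
    have key : expand ℚ n (cyclotomic 3 ℚ) =
        expand ℚ m' (cyclotomic (3 ^ (j + 1) * p) ℚ) *
          expand ℚ m' (cyclotomic (3 ^ (j + 1)) ℚ) := by
      rw [hne, ← expand_expand, ← expand_expand, expand_pow3_cyclo3,
        cyclotomic_expand_eq_cyclotomic_mul hp hp3, map_mul]
    have hm'0 : m' ≠ 0 := by rintro rfl; rw [mul_zero] at hm'; exact hm0 hm'
    have hdeg1 : 0 < (expand ℚ m' (cyclotomic (3 ^ (j + 1) * p) ℚ)).natDegree := by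
      rw [natDegree_expand, natDegree_cyclotomic]
      exact Nat.mul_pos (Nat.totient_pos.2 (Nat.mul_pos (by positivity) hp.pos))
        (Nat.pos_of_ne_zero hm'0)
    have hdeg2 : 0 < (expand ℚ m' (cyclotomic (3 ^ (j + 1)) ℚ)).natDegree := by
      rw [natDegree_expand, natDegree_cyclotomic]
      exact Nat.mul_pos (Nat.totient_pos.2 (by positivity)) (Nat.pos_of_ne_zero hm'0)
    rcases h.isUnit_or_isUnit key with hu | hu
    · exact (not_isUnit_of_natDegree_pos _ hdeg1) hu
    · exact (not_isUnit_of_natDegree_pos _ hdeg2) hu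
  · rintro ⟨j, rfl⟩
    rw [expand_pow3_cyclo3]
    exact cyclotomic.irreducible_rat (by positivity)
end

section
/- Let a ≥ 2 and n ≥ 1 be integers. If a^{2n} + a^n + 1 is a prime number, then n = 3^j for some integer j ≥ 0. -/
lemma key_dvd (b : ℤ) (k : ℕ) (hk : ¬ 3 ∣ k) :
    (b ^ 2 + b + 1) ∣ (b ^ (2 * k) + b ^ k + 1) := by
  set m : ℤ := b ^ 2 + b + 1 with hm
  have h3 : b ^ 3 ≡ 1 [ZMOD m] := by
    rw [Int.modEq_iff_dvd]
    exact ⟨1 - b, by ring⟩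
  have hpow : ∀ t : ℕ, b ^ t ≡ b ^ (t % 3) [ZMOD m] := by
    intro t
    conv_lhs => rw [show t = 3 * (t / 3) + t % 3 by omega]
    rw [pow_add, pow_mul]
    calc (b ^ 3) ^ (t / 3) * b ^ (t % 3)
        ≡ 1 ^ (t / 3) * b ^ (t % 3) [ZMOD m] := ((h3.pow _).mul_right _)
      _ = b ^ (t % 3) := by ring
  have hk3 : k % 3 = 1 ∨ k % 3 = 2 := by omega
  have hcong : b ^ (2 * k) + b ^ k + 1 ≡ b ^ 2 + b + 1 [ZMOD m] := by
    rcases hk3 with hr | hr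
    · have h2 : (2 * k) % 3 = 2 := by omega
      calc b ^ (2 * k) + b ^ k + 1
          ≡ b ^ ((2*k) % 3) + b ^ (k % 3) + 1 [ZMOD m] :=
            ((hpow (2*k)).add (hpow k)).add_right 1
        _ = b ^ 2 + b + 1 := by rw [h2, hr]; ring
    · have h2 : (2 * k) % 3 = 1 := by omega
      calc b ^ (2 * k) + b ^ k + 1
          ≡ b ^ ((2*k) % 3) + b ^ (k % 3) + 1 [ZMOD m] :=
            ((hpow (2*k)).add (hpow k)).add_right 1
        _ = b ^ 2 + b + 1 := by rw [h2, hr]; ring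
  have h0 : b ^ (2 * k) + b ^ k + 1 ≡ 0 [ZMOD m] :=
    hcong.trans (Int.modEq_zero_iff_dvd.mpr dvd_rfl)
  exact Int.modEq_zero_iff_dvd.mp h0

theorem prime_a_pow_two_n_add_a_pow_n_add_one
    (a n : ℕ) (ha : 2 ≤ a) (hn : 1 ≤ n)
    (h : Nat.Prime (a ^ (2 * n) + a ^ n + 1)) :
    ∃ j : ℕ, n = 3 ^ j := by
  set j := n.factorization 3 with hj
  refine ⟨j, ?_⟩
  set k := n / 3 ^ j with hk
  have hn0 : n ≠ 0 := by omega
  have hnd : ¬ (3 ∣ k) := Nat.not_dvd_ordCompl (by norm_num) hn0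
  have hsplit : 3 ^ j * k = n := Nat.ordProj_mul_ordCompl_eq_self n 3
  have hk0 : k ≠ 0 := by
    intro h0; rw [h0, mul_zero] at hsplit; exact hn0 hsplit.symm
  rcases Nat.eq_or_lt_of_le (Nat.one_le_iff_ne_zero.mpr hk0) with h1 | h1
  · rw [← hsplit, ← h1, mul_one]
  -- k ≥ 2 : derive contradiction
  exfalso
  set t := 3 ^ j with ht
  have ht1 : 1 ≤ t := Nat.one_le_pow _ _ (by norm_num)
  have hdvd : (a ^ (2 * t) + a ^ t + 1) ∣ (a ^ (2 * n) + a ^ n + 1) := by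
    have := key_dvd ((a : ℤ) ^ t) k hnd
    have heq1 : ((a : ℤ) ^ t) ^ (2 * k) = (a : ℤ) ^ (2 * n) := by
      rw [← pow_mul, ← hsplit]; ring_nf
    have heq2 : ((a : ℤ) ^ t) ^ k = (a : ℤ) ^ n := by
      rw [← pow_mul, ← hsplit]
    have heq3 : ((a : ℤ) ^ t) ^ 2 = (a : ℤ) ^ (2 * t) := by
      rw [← pow_mul]; ring_nf
    rw [heq1, heq2, heq3] at this
    exact_mod_cast this
  have hlt : a ^ (2 * t) + a ^ t + 1 < a ^ (2 * n) + a ^ n + 1 := by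
    have hnt : 2 * t ≤ n := by
      rw [← hsplit]; nlinarith
    have h2 : a ^ (2 * t) < a ^ (2 * n) :=
      Nat.pow_lt_pow_right (by omega) (by omega)
    have h3 : a ^ t ≤ a ^ n :=
      Nat.pow_le_pow_right (by omega) (by omega)
    omega
  have hgt : 1 < a ^ (2 * t) + a ^ t + 1 := by
    have : 1 ≤ a ^ t := Nat.one_le_pow _ _ (by omega)
    omega
  rcases (Nat.Prime.eq_one_or_self_of_dvd h _ hdvd) with h' | h' <;> omega
end

section
/- Let p be a prime and n a positive integer. The polynomial Φ_p(x^n) = x^{n(p−1)} + x^{n(p−2)} + ⋯ + x^n + 1 is irreducible over ℚ if and only if n = p^j for some integer j ≥ 0. -/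
/-!
Write `Φ_p(x^n)` as the expansion of `Φ_p` by `n`. Expanding `Φ_m` by a prime `q` gives
`Φ_{mq}` when `q ∣ m` and `Φ_{mq} Φ_m` otherwise. So expanding `Φ_p` by `p^j` gives the
irreducible `Φ_{p^{j+1}}`, while a prime factor `q ≠ p` of `n` splits `Φ_p(x^n)` into two
nonconstant factors.
-/

open Polynomial

theorem Nat.exists_prime_dvd_ne_of_forall_ne_pow {n p : ℕ} (hn : n ≠ 0)
    (h : ∀ j, n ≠ p ^ j) : ∃ q, q.Prime ∧ q ∣ n ∧ q ≠ p := by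
  by_contra! hq
  exact h _ (Nat.eq_prime_pow_of_unique_prime_dvd hn fun hd hdn => hq _ hd hdn)

namespace Polynomial

theorem expand_prime_pow_cyclotomic {p n : ℕ} (hp : p.Prime) (hdiv : p ∣ n) (R : Type*)
    [CommRing R] (j : ℕ) : expand R (p ^ j) (cyclotomic n R) = cyclotomic (n * p ^ j) R := by
  induction j with
  | zero => simp
  | succ j ih =>
    rw [pow_succ', expand_mul, ih,
      cyclotomic_expand_eq_cyclotomic hp (dvd_mul_of_dvd_left hdiv _), mul_assoc, mul_comm (p ^ j)]

theorem not_isUnit_expand_cyclotomic {n s : ℕ} (hn : 0 < n) (hs : 0 < s) (R : Type*)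
    [CommRing R] [IsDomain R] : ¬ IsUnit (expand R s (cyclotomic n R)) := by
  apply not_isUnit_of_natDegree_pos
  rw [natDegree_expand, natDegree_cyclotomic]
  exact Nat.mul_pos (Nat.totient_pos.2 hn) hs

theorem not_irreducible_expand_cyclotomic {q n m : ℕ} (hq : q.Prime) (hqn : ¬ q ∣ n)
    (hqm : q ∣ m) (hn : 0 < n) (hm : 0 < m) (R : Type*) [CommRing R] [IsDomain R] :
    ¬ Irreducible (expand R m (cyclotomic n R)) := by
  obtain ⟨s, rfl⟩ := hqm
  have hs : 0 < s := Nat.pos_of_mul_pos_left hm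
  rw [mul_comm, expand_mul, cyclotomic_expand_eq_cyclotomic_mul hq hqn, map_mul]
  intro h
  rcases h.isUnit_or_isUnit rfl with h | h
  · exact not_isUnit_expand_cyclotomic (Nat.mul_pos hn hq.pos) hs R h
  · exact not_isUnit_expand_cyclotomic hn hs R h

end Polynomial

theorem irreducible_cyclotomic_prime_comp_X_pow_iff
    (p n : ℕ) (hp : p.Prime) (hn : 0 < n) :
    Irreducible ((cyclotomic p ℚ).comp (X ^ n)) ↔ ∃ j : ℕ, n = p ^ j := by
  rw [← expand_eq_comp_X_pow]
  constructor
  · intro h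
    by_contra! hpow
    obtain ⟨q, hq, hqn, hqp⟩ := Nat.exists_prime_dvd_ne_of_forall_ne_pow hn.ne' hpow
    have hqp : ¬ q ∣ p := fun hdvd => hqp ((Nat.prime_dvd_prime_iff_eq hq hp).1 hdvd)
    exact not_irreducible_expand_cyclotomic hq hqp hqn hp.pos hn ℚ h
  · rintro ⟨j, rfl⟩
    rw [expand_prime_pow_cyclotomic hp dvd_rfl, ← pow_succ']
    exact cyclotomic.irreducible_rat (pow_pos hp.pos _)
end

section
/- Let k > 1 and n ≥ 1 be integers. The polynomial Φ_k(x^n) is irreducible over ℚ if and only if every prime that divides n also divides k. -/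
/-!
Both directions come from the two expansion identities for cyclotomic polynomials at a prime
`p`: `Φ_k(x^p) = Φ_{kp}(x)` when `p ∣ k`, and `Φ_k(x^p) = Φ_{kp}(x) Φ_k(x)` when `p ∤ k`.
Iterating the first over the prime factors of `n` gives `Φ_k(x^n) = Φ_{kn}`, which is
irreducible. If instead some `p ∣ n` does not divide `k`, substituting `x^(n/p)` into the
second yields a factorization into two nonconstant polynomials.
-/

open Polynomial

theorem expand_cyclotomic_of_forall_prime_dvd (R : Type*) [CommRing R] {k n : ℕ} (hn : n ≠ 0)
    (hdvd : ∀ p : ℕ, p.Prime → p ∣ n → p ∣ k) :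
    expand R n (cyclotomic k R) = cyclotomic (k * n) R := by
  induction n using Nat.recOnMul generalizing k with
  | zero => exact (hn rfl).elim
  | one => simp
  | prime p hp => exact cyclotomic_expand_eq_cyclotomic hp (hdvd p hp dvd_rfl) R
  | mul a b iha ihb =>
    rw [← expand_expand, ihb (right_ne_zero_of_mul hn) fun p hp hpb => hdvd p hp (hpb.mul_left a),
      iha (left_ne_zero_of_mul hn) fun p hp hpa => (hdvd p hp (hpa.mul_right b)).mul_right b,
      mul_assoc, mul_comm b]

theorem natDegree_expand_cyclotomic_pos (R : Type*) [CommRing R] [Nontrivial R] {k n : ℕ}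
    (hk : 0 < k) (hn : 0 < n) : 0 < (expand R n (cyclotomic k R)).natDegree := by
  rw [natDegree_expand, natDegree_cyclotomic]
  exact Nat.mul_pos (Nat.totient_pos.2 hk) hn

theorem not_irreducible_expand_cyclotomic (R : Type*) [CommRing R] [IsDomain R] {k n p : ℕ}
    (hk : 0 < k) (hn : n ≠ 0) (hp : p.Prime) (hpn : p ∣ n) (hpk : ¬p ∣ k) :
    ¬Irreducible (expand R n (cyclotomic k R)) := by
  obtain ⟨m, rfl⟩ := hpn
  have hm : 0 < m := Nat.pos_of_ne_zero (right_ne_zero_of_mul hn)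
  rw [mul_comm p m, ← expand_expand, cyclotomic_expand_eq_cyclotomic_mul hp hpk, map_mul]
  intro hirr
  rcases of_irreducible_mul hirr with h | h
  · exact not_isUnit_of_natDegree_pos _
      (natDegree_expand_cyclotomic_pos R (Nat.mul_pos hk hp.pos) hm) h
  · exact not_isUnit_of_natDegree_pos _ (natDegree_expand_cyclotomic_pos R hk hm) h

theorem irreducible_cyclotomic_comp_X_pow_iff
    (k n : ℕ) (hk : 1 < k) (hn : 1 ≤ n) :
    Irreducible ((cyclotomic k ℚ).comp (X ^ n)) ↔
      ∀ p : ℕ, p.Prime → p ∣ n → p ∣ k := by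
  have hk₀ : 0 < k := by omega
  have hn₀ : n ≠ 0 := by omega
  rw [← expand_eq_comp_X_pow]
  refine ⟨fun hirr p hp hpn => ?_, fun hdvd => ?_⟩
  · by_contra hpk
    exact not_irreducible_expand_cyclotomic ℚ hk₀ hn₀ hp hpn hpk hirr
  · rw [expand_cyclotomic_of_forall_prime_dvd ℚ hn₀ hdvd]
    exact cyclotomic.irreducible_rat (Nat.mul_pos hk₀ hn)
end

section
/- Let k and n be positive integers. The polynomial Φ_k(x^n) is irreducible over ℚ if and only if φ(nk) = n·φ(k), where φ is Euler's totient function. -/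
/-!
Raising to the `n`-th power sends a primitive `nk`-th root of unity to a primitive `k`-th one, so
`Φ_{nk}` divides `Φ_k(X^n)`. Both are monic, `Φ_{nk}` is irreducible over `ℚ` of degree `φ(nk)`
and `Φ_k(X^n)` has degree `n φ(k)`; hence `Φ_k(X^n)` is irreducible exactly when it equals
`Φ_{nk}`, i.e. exactly when the two degrees agree.
-/

open Polynomial

theorem Polynomial.Monic.irreducible_iff_natDegree_eq_of_dvd {R : Type*} [CommRing R]
    [IsDomain R] {p q : R[X]} (hp : p.Monic) (hq : q.Monic) (hq_irr : Irreducible q)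
    (hqp : q ∣ p) : Irreducible p ↔ p.natDegree = q.natDegree := by
  refine ⟨fun hp_irr => ?_, fun hdeg => ?_⟩
  · rw [eq_of_monic_of_associated hq hp (hq_irr.associated_of_dvd hp_irr hqp)]
  · exact eq_of_monic_of_dvd_of_natDegree_le hq hp hqp hdeg.le ▸ hq_irr

theorem cyclotomic_mul_dvd_cyclotomic_comp_X_pow (k n : ℕ) (R : Type*) [CommRing R] :
    cyclotomic (n * k) R ∣ (cyclotomic k R).comp (X ^ n) := by
  suffices cyclotomic (n * k) ℤ ∣ (cyclotomic k ℤ).comp (X ^ n) by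
    simpa only [map_cyclotomic, map_comp, Polynomial.map_pow, map_X] using
      Polynomial.map_dvd (Int.castRingHom R) this
  rcases Nat.eq_zero_or_pos (n * k) with hnk | hnk
  · simp [hnk]
  have := NeZero.of_pos (Nat.pos_of_mul_pos_left hnk)
  set μ := Complex.exp (2 * Real.pi * Complex.I / (n * k : ℕ))
  have hμ : IsPrimitiveRoot μ (n * k) := Complex.isPrimitiveRoot_exp _ hnk.ne'
  have hμn : IsPrimitiveRoot (μ ^ n) k := hμ.pow hnk rfl
  rw [cyclotomic_eq_minpoly hμ hnk]
  refine minpoly.isIntegrallyClosed_dvd (hμ.isIntegral hnk) ?_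
  rwa [aeval_comp, aeval_X_pow, aeval_def, eval₂_eq_eval_map, map_cyclotomic, ← IsRoot.def,
    isRoot_cyclotomic_iff]

theorem monic_cyclotomic_comp_X_pow (k : ℕ) {n : ℕ} (hn : n ≠ 0) (R : Type*) [CommRing R] :
    ((cyclotomic k R).comp (X ^ n)).Monic := by
  nontriviality R
  exact (cyclotomic.monic k R).comp (monic_X_pow n) (by simpa using hn)

theorem natDegree_cyclotomic_comp_X_pow (k n : ℕ) (R : Type*) [CommRing R] [Nontrivial R] :
    ((cyclotomic k R).comp (X ^ n)).natDegree = n * Nat.totient k := by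
  rw [← expand_eq_comp_X_pow, natDegree_expand, natDegree_cyclotomic, mul_comm]

theorem irreducible_cyclotomic_comp_X_pow_iff_totient
    (k n : ℕ) (hk : 0 < k) (hn : 0 < n) :
    Irreducible ((cyclotomic k ℚ).comp (X ^ n)) ↔
      Nat.totient (n * k) = n * Nat.totient k := by
  rw [(monic_cyclotomic_comp_X_pow k hn.ne' ℚ).irreducible_iff_natDegree_eq_of_dvd
      (cyclotomic.monic _ ℚ) (cyclotomic.irreducible_rat (mul_pos hn hk))
      (cyclotomic_mul_dvd_cyclotomic_comp_X_pow k n ℚ),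
    natDegree_cyclotomic_comp_X_pow, natDegree_cyclotomic, eq_comm]
end

section
/- Let k > 1 and n ≥ 1 be integers. Let m = ∏_{p | k} p^{v_p(n)}, where the product is over primes p dividing k and v_p(n) is the p-adic valuation of n, and let N = n/m. Then Φ_k(x^n) = Φ_{km}(x^N) = ∏_{d | N} Φ_{kmd}(x). -/
/-! Φ_k(x^n) is `expand n Φ_k`, and we expand in two stages along n = N · m. Expanding by a prime
dividing the index just multiplies the index by it, so expanding by m, all of whose primes divide k,
gives Φ_{km}. Expanding Φ_j by a prime p ∤ j gives Φ_{jp} Φ_j; iterating this over a prime power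
and then over coprime factors of N, which is coprime to km, gives ∏_{d ∣ N} Φ_{kmd}. -/

open Polynomial Finset

theorem Nat.Coprime.prod_divisors_mul {M : Type*} [CommMonoid M] {a b : ℕ} (hab : a.Coprime b)
    (f : ℕ → M) :
    ∏ d ∈ (a * b).divisors, f d = ∏ e ∈ a.divisors, ∏ d ∈ b.divisors, f (e * d) := by
  rw [hab.divisors_mul, prod_map]
  exact (prod_attach _ fun x : ℕ × ℕ => f (x.1 * x.2)).trans (prod_product _ _ _)

theorem Nat.prod_pow_factorization_dvd (n : ℕ) {s : Finset ℕ} (hs : ∀ p ∈ s, p.Prime) :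
    ∏ p ∈ s, p ^ n.factorization p ∣ n := by
  induction s using Finset.induction_on with
  | empty => exact one_dvd n
  | insert p s hps ih =>
    have hp := hs p (mem_insert_self p s)
    have hs' := fun q hq => hs q (mem_insert_of_mem hq)
    rw [prod_insert hps]
    refine Nat.Coprime.mul_dvd_of_dvd_of_dvd ?_ (Nat.ordProj_dvd n p) (ih hs')
    refine Nat.Coprime.prod_right fun q hq => Nat.Coprime.pow _ _ ?_
    exact (Nat.coprime_primes hp (hs' q hq)).2 fun hpq => hps (hpq ▸ hq)

theorem Nat.Prime.dvd_of_dvd_prod_primeFactors_pow {q k : ℕ} (hq : q.Prime) (e : ℕ → ℕ)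
    (h : q ∣ ∏ p ∈ k.primeFactors, p ^ e p) : q ∣ k := by
  obtain ⟨p, hp, hqp⟩ := (Prime.dvd_finsetProd_iff hq.prime _).1 h
  rw [(Nat.prime_dvd_prime_iff_eq hq (Nat.prime_of_mem_primeFactors hp)).1 (hq.dvd_of_dvd_pow hqp)]
  exact Nat.dvd_of_mem_primeFactors hp

theorem Nat.coprime_div_prod_primeFactors_pow_factorization {n k : ℕ} (hn : n ≠ 0) (hk : k ≠ 0) :
    (n / ∏ p ∈ k.primeFactors, p ^ n.factorization p).Coprime k := by
  set m := ∏ p ∈ k.primeFactors, p ^ n.factorization p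
  have hmn : m * (n / m) = n :=
    Nat.mul_div_cancel' (Nat.prod_pow_factorization_dvd n fun _ => Nat.prime_of_mem_primeFactors)
  refine Nat.coprime_of_dvd fun p hp hpN hpk => Nat.pow_succ_factorization_not_dvd hn hp ?_
  have hpm : p ^ n.factorization p ∣ m := dvd_prod_of_mem _ (Nat.mem_primeFactors.2 ⟨hp, hpk, hk⟩)
  simpa only [hmn, ← pow_succ] using mul_dvd_mul hpm hpN

namespace Polynomial

variable {R : Type*} [CommRing R]

theorem cyclotomic_expand_eq_cyclotomic_of_forall_prime_dvd {m k : ℕ} (hm : m ≠ 0)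
    (h : ∀ p, p.Prime → p ∣ m → p ∣ k) :
    expand R m (cyclotomic k R) = cyclotomic (k * m) R := by
  induction m using Nat.recOnMul generalizing k with
  | zero => exact absurd rfl hm
  | one => simp
  | prime p hp => exact cyclotomic_expand_eq_cyclotomic hp (h p hp dvd_rfl) R
  | mul a b iha ihb =>
    rw [← expand_expand, ihb (right_ne_zero_of_mul hm) fun p hp hpb => h p hp (hpb.mul_left a),
      iha (left_ne_zero_of_mul hm) fun p hp hpa => (h p hp (hpa.mul_right b)).mul_right b,
      mul_assoc, mul_comm b a]

theorem cyclotomic_expand_prime_pow_eq_prod {p k : ℕ} (hp : p.Prime) (hpk : ¬p ∣ k) (a : ℕ) :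
    expand R (p ^ a) (cyclotomic k R) = ∏ j ∈ range (a + 1), cyclotomic (k * p ^ j) R := by
  induction a with
  | zero => simp
  | succ a ih =>
    rw [pow_succ, ← expand_expand, cyclotomic_expand_eq_cyclotomic_mul hp hpk, map_mul, ih,
      cyclotomic_expand_eq_cyclotomic_of_forall_prime_dvd (pow_ne_zero a hp.ne_zero)
        fun q hq hqa => (hq.dvd_of_dvd_pow hqa).trans (dvd_mul_left p k),
      prod_range_succ _ (a + 1), mul_comm, mul_assoc, ← pow_succ']

theorem cyclotomic_expand_eq_prod_divisors {N k : ℕ} (hN : N ≠ 0) (hNk : N.Coprime k) :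
    expand R N (cyclotomic k R) = ∏ d ∈ N.divisors, cyclotomic (k * d) R := by
  induction N using Nat.recOnPosPrimePosCoprime generalizing k with
  | zero => exact absurd rfl hN
  | one => simp
  | prime_pow p a hp ha =>
    have hpk : ¬p ∣ k := hp.coprime_iff_not_dvd.1 ((Nat.coprime_pow_left_iff ha _ _).1 hNk)
    rw [cyclotomic_expand_prime_pow_eq_prod hp hpk, Nat.prod_divisors_prime_pow hp]
  | coprime a b ha hb hab iha ihb =>
    rw [← expand_expand, ihb (by omega) (hNk.coprime_dvd_left (dvd_mul_left b a)), map_prod,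
      hab.prod_divisors_mul, prod_comm]
    refine prod_congr rfl fun d hd => ?_
    have hak : a.Coprime (k * d) := (hNk.coprime_dvd_left (dvd_mul_right a b)).mul_right
      (hab.coprime_dvd_right (Nat.dvd_of_mem_divisors hd))
    rw [iha (by omega) hak]
    exact prod_congr rfl fun e _ => by rw [mul_assoc, mul_comm d e]

end Polynomial

theorem cyclotomic_comp_X_pow_factorization
    (k n m N : ℕ) (hk : 1 < k) (hn : 1 ≤ n)
    (hm : m = ∏ p ∈ k.primeFactors, p ^ (n.factorization p))
    (hN : N = n / m) :
    (cyclotomic k ℤ).comp (X ^ n) = (cyclotomic (k * m) ℤ).comp (X ^ N) ∧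
      (cyclotomic k ℤ).comp (X ^ n) = ∏ d ∈ N.divisors, cyclotomic (k * m * d) ℤ := by
  subst hN
  have hmn : m ∣ n := hm ▸ Nat.prod_pow_factorization_dvd n fun _ => Nat.prime_of_mem_primeFactors
  have hmN_ne_zero : m * (n / m) ≠ 0 := by rw [Nat.mul_div_cancel' hmn]; omega
  have hNk : (n / m).Coprime k :=
    hm ▸ Nat.coprime_div_prod_primeFactors_pow_factorization (by omega) (by omega)
  have hm_primes : ∀ p, p.Prime → p ∣ m → p ∣ k := fun p hp hpm =>
    hp.dvd_of_dvd_prod_primeFactors_pow _ (hm ▸ hpm)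
  have hNm : (n / m).Coprime m := Nat.coprime_of_dvd fun p hp hpN hpm =>
    Nat.Prime.not_coprime_iff_dvd.2 ⟨p, hp, hpN, hm_primes p hp hpm⟩ hNk
  have hcomp : (cyclotomic k ℤ).comp (X ^ n) = (cyclotomic (k * m) ℤ).comp (X ^ (n / m)) := by
    rw [← expand_eq_comp_X_pow, ← expand_eq_comp_X_pow,
      ← cyclotomic_expand_eq_cyclotomic_of_forall_prime_dvd (left_ne_zero_of_mul hmN_ne_zero) hm_primes,
      expand_expand, Nat.div_mul_cancel hmn]
  refine ⟨hcomp, ?_⟩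
  rw [hcomp, ← expand_eq_comp_X_pow,
    cyclotomic_expand_eq_prod_divisors (right_ne_zero_of_mul hmN_ne_zero) (hNk.mul_right hNm)]
end

section
/- Let p be a monic irreducible polynomial with integer coefficients of degree 2000 such that p(n) divides p(n^2) for every natural number n. Then p = Φ_j for some j ∈ {2525, 3333, 3765, 4125}. -/
/-!
If `p(n) ∣ p(n²)` for all `n`, then `p ∣ p(X²)`: the remainder `r` of `p(X²)` modulo `p` satisfies
`p(n) ∣ r(n)` while `|r(n)| < |p(n)|` for large `n`, so `r` has infinitely many roots. Hence the
complex roots of `p` are closed under squaring; there are finitely many and none is `0`, so they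
are roots of unity, and the irreducible `p` is the minimal polynomial `Φ_d` of one of order `d`.
Squaring permutes the primitive `d`-th roots of unity only when `d` is odd. Finally
`φ(d) = deg p = 2000` with `d` odd: every prime `q ∣ d` has `q - 1 ∣ 2000`, which leaves eight
primes with bounded exponents, and a finite search gives the four values of `d`.
-/

open Filter Polynomial
open scoped Nat

namespace Polynomial

theorem eventually_eval_eq_zero_of_eval_dvd {p r : ℤ[X]} (hdeg : r.degree < p.degree)
    (h : ∀ᶠ n : ℕ in atTop, p.eval (n : ℤ) ∣ r.eval (n : ℤ)) :
    ∀ᶠ n : ℕ in atTop, r.eval (n : ℤ) = 0 := by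
  have hmap (s : ℤ[X]) : (s.map (Int.castRingHom ℝ)).degree = s.degree :=
    degree_map_eq_of_injective Int.cast_injective s
  have hratio := (div_tendsto_atTop_zero_of_degree_lt (r.map (Int.castRingHom ℝ))
    (p.map (Int.castRingHom ℝ)) (by rwa [hmap, hmap])).comp tendsto_natCast_atTop_atTop
  filter_upwards [h, hratio.eventually (Metric.ball_mem_nhds 0 one_pos)] with n hdvd hsmall
  by_contra hr
  have hp : p.eval (n : ℤ) ≠ 0 := fun hp0 => hr (zero_dvd_iff.1 (hp0 ▸ hdvd))
  have hle : |p.eval (n : ℤ)| ≤ |r.eval (n : ℤ)| :=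
    Int.le_of_dvd (abs_pos.2 hr) ((abs_dvd_abs _ _).2 hdvd)
  simp only [Function.comp_apply, dist_zero_right, norm_div, eval_natCast_map,
    eq_intCast, Real.norm_eq_abs] at hsmall
  rw [div_lt_one (by positivity)] at hsmall
  exact hsmall.not_ge (by exact_mod_cast hle)

theorem Monic.dvd_of_eventually_eval_dvd {p q : ℤ[X]} (hp : p.Monic)
    (h : ∀ᶠ n : ℕ in atTop, p.eval (n : ℤ) ∣ q.eval (n : ℤ)) : p ∣ q := by
  rw [← modByMonic_eq_zero_iff_dvd hp]
  have hr : ∀ᶠ n : ℕ in atTop, (q %ₘ p).eval (n : ℤ) = 0 := by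
    refine eventually_eval_eq_zero_of_eval_dvd (degree_modByMonic_lt q hp) (h.mono fun n hn => ?_)
    rw [modByMonic_eq_sub_mul_div, eval_sub, eval_mul]
    exact dvd_sub hn (dvd_mul_right _ _)
  refine eq_zero_of_infinite_isRoot _ <|
    ((Nat.frequently_atTop_iff_infinite.1 hr.frequently).image Nat.cast_injective.injOn).mono ?_
  rintro _ ⟨n, hn, rfl⟩
  exact hn

theorem IsRoot.pow_of_dvd_comp_X_pow {R : Type*} [CommSemiring R] {P : R[X]} {k : ℕ}
    (hdvd : P ∣ P.comp (X ^ k)) {α : R} (hα : P.IsRoot α) : P.IsRoot (α ^ k) := by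
  obtain ⟨u, hu⟩ := hdvd
  have := congrArg (eval α) hu
  rwa [eval_comp, eval_pow, eval_X, eval_mul, hα.eq_zero, zero_mul] at this

theorem isOfFinOrder_of_isRoot_of_dvd_comp_X_pow {K : Type*} [Field K] {P : K[X]} (hP : P ≠ 0)
    {k : ℕ} (hk : 2 ≤ k) (hdvd : P ∣ P.comp (X ^ k)) {α : K} (hα : P.IsRoot α) (hα0 : α ≠ 0) :
    IsOfFinOrder α := by
  have hroots (i : ℕ) : P.IsRoot (α ^ k ^ i) := by
    induction i with
    | zero => simpa using hα
    | succ i ih => simpa [pow_succ, pow_mul] using ih.pow_of_dvd_comp_X_pow hdvd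
  obtain ⟨a, -, b, -, hab, heq⟩ := Set.infinite_univ.exists_ne_map_eq_of_mapsTo
    (fun i _ => hroots i) (finite_setOfPred_isRoot hP)
  obtain ⟨i, j, hij, heq⟩ : ∃ i j : ℕ, i < j ∧ α ^ k ^ i = α ^ k ^ j := by
    rcases hab.lt_or_gt with h | h
    exacts [⟨a, b, h, heq⟩, ⟨b, a, h, heq.symm⟩]
  have hpow : k ^ i < k ^ j := Nat.pow_lt_pow_right hk hij
  refine isOfFinOrder_iff_pow_eq_one.2 ⟨k ^ j - k ^ i, Nat.sub_pos_of_lt hpow, ?_⟩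
  rw [pow_sub₀ α hα0 hpow.le, ← heq, mul_inv_cancel₀ (pow_ne_zero _ hα0)]

theorem Monic.eq_cyclotomic_of_dvd_comp_X_pow {p : ℤ[X]} (hmonic : p.Monic)
    (hirr : Irreducible p) (hX : p ≠ X) {k : ℕ} (hk : 2 ≤ k) (hdvd : p ∣ p.comp (X ^ k)) :
    ∃ n, k.Coprime n ∧ p = cyclotomic n ℤ := by
  set P : ℂ[X] := p.map (algebraMap ℤ ℂ)
  have hPdvd : P ∣ P.comp (X ^ k) := by simpa [P, map_comp] using Polynomial.map_dvd _ hdvd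
  have hroot {z : ℂ} : P.IsRoot z ↔ aeval z p = 0 := by rw [IsRoot, eval_map_algebraMap]
  obtain ⟨α, hα⟩ := Complex.exists_root (f := P) <| by
    rw [hmonic.degree_map, ← natDegree_pos_iff_degree_pos]
    exact hmonic.natDegree_pos_of_not_isUnit hirr.not_isUnit
  have hint : IsIntegral ℤ α := ⟨p, hmonic, hroot.1 hα⟩
  have hmin : minpoly ℤ α = p := eq_of_monic_of_associated (minpoly.monic hint) hmonic <|
    (minpoly.irreducible hint).associated_of_dvd hirr
      (minpoly.isIntegrallyClosed_dvd hint (hroot.1 hα))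
  have hα0 : α ≠ 0 := by
    rintro rfl
    have hXp : X ∣ p := X_dvd_iff.2 <| by
      simpa [← coeff_zero_eq_aeval_zero'] using hroot.1 hα
    exact hX <| eq_of_monic_of_associated hmonic monic_X
      (irreducible_X.associated_of_dvd hirr hXp).symm
  have hfin := isOfFinOrder_of_isRoot_of_dvd_comp_X_pow (hmonic.map _).ne_zero hk hPdvd hα hα0
  have hprim := IsPrimitiveRoot.orderOf α
  have hpos := hfin.orderOf_pos
  have hcyc : p = cyclotomic (orderOf α) ℤ := by rw [cyclotomic_eq_minpoly hprim hpos, hmin]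
  refine ⟨orderOf α, ?_, hcyc⟩
  have hαk : IsPrimitiveRoot (α ^ k) (orderOf α) := by
    rw [← isRoot_cyclotomic_iff_charZero hpos, ← map_cyclotomic_int, ← hcyc]
    exact hα.pow_of_dvd_comp_X_pow hPdvd
  exact (hprim.pow_iff_coprime hpos k).1 hαk

end Polynomial

namespace Nat

theorem Prime.sub_one_dvd_totient {q d : ℕ} (hq : q.Prime) (h : q ∣ d) : q - 1 ∣ φ d := by
  simpa [totient_prime hq] using totient_dvd_of_dvd h

theorem factorization_lt_of_not_totient_dvd {d q k : ℕ} (hq : q.Prime) (hd : d ≠ 0)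
    (h : ¬φ (q ^ k) ∣ φ d) : d.factorization q < k := by
  by_contra! hk
  exact h (totient_dvd_of_dvd ((hq.pow_dvd_iff_le_factorization hd).2 hk))

theorem multiplicative_eq_prod_of_primeFactors_subset {β : Type*} [CommMonoid β] (f : ℕ → β)
    (h_mult : ∀ x y : ℕ, Coprime x y → f (x * y) = f x * f y) (hf : f 1 = 1) {n : ℕ} (hn : n ≠ 0)
    {S : Finset ℕ} (hS : n.primeFactors ⊆ S) : f n = ∏ q ∈ S, f (q ^ n.factorization q) := by
  rw [multiplicative_factorization f h_mult hf hn]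
  exact Finsupp.prod_of_support_subset _ (support_factorization n ▸ hS) _ fun _ _ => by simpa

end Nat

/-- `φ (q ^ k)` for a prime `q`, in a form that `decide` evaluates. -/
def primePowTotient (q k : ℕ) : ℕ := if k = 0 then 1 else q ^ (k - 1) * (q - 1)

theorem Nat.totient_prime_pow_eq_primePowTotient {q : ℕ} (hq : q.Prime) (k : ℕ) :
    φ (q ^ k) = primePowTotient q k := by
  rcases k with _ | k
  · simp [primePowTotient]
  · simp [primePowTotient, totient_prime_pow_succ hq]

theorem prime_mem_of_sub_one_dvd_2000 {q : ℕ} (hq : q.Prime) (h2 : q ≠ 2) (h : q - 1 ∣ 2000) :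
    q ∈ ({3, 5, 11, 17, 41, 101, 251, 401} : Finset ℕ) := by
  have key : ∀ m ∈ Nat.divisors 2000, (m + 1).Prime → m + 1 ≠ 2 →
      m + 1 ∈ ({3, 5, 11, 17, 41, 101, 251, 401} : Finset ℕ) := by
    decide +kernel
  simpa [Nat.sub_add_cancel hq.one_le, hq, h2] using
    key (q - 1) (Nat.mem_divisors.2 ⟨h, by norm_num⟩)

set_option synthInstance.maxSize 20000 in
theorem prod_pow_mem_of_prod_primePowTotient_eq_2000 :
    ∀ a < 2, ∀ b < 5, ∀ c < 2, ∀ d < 2, ∀ e < 2, ∀ f < 2, ∀ g < 2, ∀ h < 2,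
    primePowTotient 3 a * (primePowTotient 5 b * (primePowTotient 11 c * (primePowTotient 17 d *
      (primePowTotient 41 e * (primePowTotient 101 f * (primePowTotient 251 g *
        primePowTotient 401 h)))))) = 2000 →
    3 ^ a * (5 ^ b * (11 ^ c * (17 ^ d * (41 ^ e * (101 ^ f * (251 ^ g * 401 ^ h)))))) ∈
      ({2525, 3333, 3765, 4125} : Finset ℕ) := by
  decide +kernel

theorem mem_of_odd_of_totient_eq_2000 {d : ℕ} (hodd : Odd d) (ht : φ d = 2000) :
    d ∈ ({2525, 3333, 3765, 4125} : Finset ℕ) := by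
  have hd : d ≠ 0 := by rintro rfl; simp at ht
  have hS : d.primeFactors ⊆ {3, 5, 11, 17, 41, 101, 251, 401} := fun q hq => by
    obtain ⟨hqp, hqd, -⟩ := Nat.mem_primeFactors.1 hq
    refine prime_mem_of_sub_one_dvd_2000 hqp ?_ (ht ▸ hqp.sub_one_dvd_totient hqd)
    rintro rfl
    exact hodd.not_two_dvd_nat hqd
  -- `φ (q ^ 2) = q (q - 1) ∤ 2000` for `q ≠ 5`, and `φ (5 ^ 5) = 2500 ∤ 2000`
  have hcheck : ∀ q ∈ ({3, 5, 11, 17, 41, 101, 251, 401} : Finset ℕ),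
      q.Prime ∧ ¬primePowTotient q (if q = 5 then 5 else 2) ∣ 2000 := by
    decide +kernel
  have hlt : ∀ q ∈ ({3, 5, 11, 17, 41, 101, 251, 401} : Finset ℕ),
      d.factorization q < if q = 5 then 5 else 2 := fun q hq => by
    obtain ⟨hqp, hndvd⟩ := hcheck q hq
    refine Nat.factorization_lt_of_not_totient_dvd hqp hd ?_
    rwa [ht, Nat.totient_prime_pow_eq_primePowTotient hqp]
  have hprod := Nat.multiplicative_eq_prod_of_primeFactors_subset id (fun _ _ _ => rfl) rfl hd hS
  have htot : ∏ q ∈ ({3, 5, 11, 17, 41, 101, 251, 401} : Finset ℕ),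
      primePowTotient q (d.factorization q) = 2000 := by
    rw [← ht, Nat.multiplicative_eq_prod_of_primeFactors_subset φ (fun _ _ => Nat.totient_mul)
      Nat.totient_one hd hS]
    exact Finset.prod_congr rfl fun q hq =>
      (Nat.totient_prime_pow_eq_primePowTotient (hcheck q hq).1 _).symm
  simp only [Finset.prod_insert, Finset.mem_insert, Finset.mem_singleton, Finset.prod_singleton,
    Nat.reduceEqDiff, or_self, not_false_eq_true, id, forall_eq_or_imp, forall_eq, if_true,
    if_false] at hprod htot hlt
  obtain ⟨h3, h5, h11, h17, h41, h101, h251, h401⟩ := hlt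
  rw [hprod]
  exact prod_pow_mem_of_prod_primePowTotient_eq_2000
    _ h3 _ h5 _ h11 _ h17 _ h41 _ h101 _ h251 _ h401 htot

theorem millennial_polynomial
    (p : Polynomial ℤ) (hmonic : p.Monic) (hirr : Irreducible p)
    (hdeg : p.natDegree = 2000)
    (h : ∀ n : ℕ, p.eval (n : ℤ) ∣ p.eval ((n : ℤ) ^ 2)) :
    ∃ j ∈ ({2525, 3333, 3765, 4125} : Finset ℕ), p = cyclotomic j ℤ := by
  have hdvd : p ∣ p.comp (X ^ 2) :=
    hmonic.dvd_of_eventually_eval_dvd (.of_forall fun n => by simpa [eval_comp] using h n)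
  have hX : p ≠ X := by
    rintro rfl
    simp at hdeg
  obtain ⟨n, hcop, rfl⟩ := hmonic.eq_cyclotomic_of_dvd_comp_X_pow hirr hX le_rfl hdvd
  have htot : φ n = 2000 := by rwa [natDegree_cyclotomic] at hdeg
  exact ⟨n, mem_of_odd_of_totient_eq_2000 (Nat.coprime_two_left.1 hcop) htot, rfl⟩
end

section
/- Let k > 1, a ≥ 2 and n ≥ 1 be integers. If Φ_k(a^n) is a prime number, then every prime dividing n also divides k. -/
open Polynomial

/- If a prime `q` divides `n = q * t` but not `k`, then `Φ_k(X^q) = Φ_{kq}(X) Φ_k(X)`, so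
`Φ_k(a^n) = Φ_{kq}(a^t) Φ_k(a^t)`. Both factors exceed `1` in absolute value because
`|Φ_m(b)| > b - 1 ≥ 1` for `m > 1` and `b = a^t ≥ 2`, so `Φ_k(a^n)` is not prime. -/

theorem cyclotomic_eval_pow_of_not_dvd {R : Type*} [CommRing R] {q k : ℕ} (hq : q.Prime)
    (hqk : ¬q ∣ k) (x : R) :
    (cyclotomic k R).eval (x ^ q) = (cyclotomic (k * q) R).eval x * (cyclotomic k R).eval x := by
  rw [← expand_eval, cyclotomic_expand_eq_cyclotomic_mul hq hqk, eval_mul]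

theorem not_isUnit_cyclotomic_eval {k m : ℕ} (hk : 1 < k) (hm : 2 ≤ m) :
    ¬IsUnit ((cyclotomic k ℤ).eval (m : ℤ)) := by
  have := sub_one_lt_natAbs_cyclotomic_eval hk (q := m) (by omega)
  rw [Int.isUnit_iff_natAbs_eq]
  omega

theorem prime_cyclotomic_value_imp_prime_dvd
    (k a n : ℕ) (hk : 1 < k) (ha : 2 ≤ a) (hn : 1 ≤ n)
    (h : Prime ((cyclotomic k ℤ).eval ((a : ℤ) ^ n))) :
    ∀ q : ℕ, q.Prime → q ∣ n → q ∣ k := by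
  rintro q hq ⟨t, rfl⟩
  by_contra hqk
  have hat : 2 ≤ a ^ t := ha.trans (Nat.le_self_pow (by rintro rfl; simp at hn) a)
  have hkq : 1 < k * q := hk.trans_le (Nat.le_mul_of_pos_right k hq.pos)
  rw [pow_mul', cyclotomic_eval_pow_of_not_dvd hq hqk] at h
  rcases h.irreducible.isUnit_or_isUnit rfl with hunit | hunit
  · exact not_isUnit_cyclotomic_eval hkq hat (mod_cast hunit)
  · exact not_isUnit_cyclotomic_eval hk hat (mod_cast hunit)
end
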